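/- arXiv:2411.02633 — 7 statements merged into one kernel-verified Lean document; each statement's English description precedes it below -/
import Mathlib

section
/- If D is an invertible linear operator on an algebra R satisfying the modified differential identity D(xy) = D(x)y + xD(y) - xλy for all x,y ∈ R (for a fixed λ ∈ R), then its inverse D⁻¹ satisfies the weighted Reynolds identity: D⁻¹(x)D⁻¹(y) = D⁻¹(xD⁻¹(y) + D⁻¹(x)y - D⁻¹(x)λD⁻¹(y)) for all x,y ∈ R. -/
/-- If `D` is an invertible linear operator on an algebra `R` satisfying the modified
differential identity `D(xy) = D(x)y + xD(y) - xλy`, then its inverse satisfies the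
weighted Reynolds identity. -/
theorem stmt0 {k R : Type*} [Field k] [CharZero k] [Ring R] [Algebra k R]
    (lam : R) (D : R →ₗ[k] R) (E : R → R)
    (hleft : ∀ x, E (D x) = x) (hright : ∀ x, D (E x) = x)
    (hD : ∀ x y, D (x * y) = D x * y + x * D y - x * lam * y) :
    ∀ x y, E x * E y = E (x * E y + E x * y - E x * lam * E y) := by
  intro x y
  have h := hD (E x) (E y)
  rw [hright, hright] at h
  calc E x * E y = E (D (E x * E y)) := (hleft _).symm
    _ = E (x * E y + E x * y - E x * lam * E y) := by rw [h]
end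

section
/- Let (R, P, λ) be a weighted Reynolds algebra and define x ⋆ y := P(x)y + xP(y) - P(x)λP(y). Then ⋆ is an associative multiplication on R. -/
/-- For a weighted Reynolds algebra `(R, P, λ)`, the product
`x ⋆ y := P(x)y + xP(y) - P(x)λP(y)` is associative. -/
theorem stmt4 {k R : Type*} [Field k] [CharZero k] [Ring R] [Algebra k R]
    (lam : R) (P : R →ₗ[k] R)
    (hP : ∀ x y, P x * P y = P (P x * y) + P (x * P y) - P (P x * lam * P y))
    (star : R → R → R)
    (hstar : ∀ x y, star x y = P x * y + x * P y - P x * lam * P y) :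
    ∀ x y z, star (star x y) z = star x (star y z) := by
  have h : ∀ x y, P (star x y) = P x * P y := by
    intro x y
    rw [hstar, map_sub, map_add, hP]
  intro x y z
  rw [hstar (star x y) z, hstar x (star y z), h, h, hstar x y, hstar y z]
  noncomm_ring
end

section
/- Let (R, P, λ) be a weighted Reynolds algebra such that P(λ) = λ, and define x ⋆ y := P(x)y + xP(y) - P(x)λP(y). Then (R, ⋆, P, λ) is again a weighted Reynolds algebra, i.e., P(x) ⋆ P(y) = P(P(x) ⋆ y + x ⋆ P(y) - P(x) ⋆ λ ⋆ P(y)) for all x,y ∈ R. -/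
/-- If `(R, P, λ)` is a weighted Reynolds algebra with `P(λ) = λ`, then `(R, ⋆, P, λ)`
is again a weighted Reynolds algebra. -/
theorem stmt5 {k R : Type*} [Field k] [CharZero k] [Ring R] [Algebra k R]
    (lam : R) (P : R →ₗ[k] R) (hlam : P lam = lam)
    (hP : ∀ x y, P x * P y = P (P x * y) + P (x * P y) - P (P x * lam * P y))
    (star : R → R → R)
    (hstar : ∀ x y, star x y = P x * y + x * P y - P x * lam * P y) :
    ∀ x y, star (P x) (P y) =
      P (star (P x) y + star x (P y) - star (star (P x) lam) (P y)) := by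
  intro x y
  have h3 := hP (P x) lam
  rw [hlam] at h3
  set u := P (P x) * lam + P x * lam - P (P x) * lam * lam with hu
  have h3' : P (P x) * lam = P u := by
    rw [hu, map_sub, map_add]; exact h3
  have h4 := hP u (P y)
  rw [← h3'] at h4
  have h1 := hP (P x) y
  have h2 := hP x (P y)
  simp only [hstar, hlam]
  rw [← hu, ← h3', h1, h2, h4]
  simp only [map_add, map_sub, mul_add, add_mul, sub_mul, mul_sub, mul_assoc]
end

section
/- Let (R, d, P) be a commutative unital integro-differential algebra of weight 0 (d a derivation, dP = id, and P(d(x))P(d(y)) = P(d(x))y + xP(d(y)) - P(d(xy)) for all x,y), and let λ ∈ R be invertible. Define D(x) := d(λ⁻¹x) and Π(x) := λP(x). Then Π satisfies the weighted Reynolds identity of weight D(1): Π(x)Π(y) = Π(Π(x)y) + Π(xΠ(y)) - Π(Π(x)D(1)Π(y)) for all x,y ∈ R, and D∘Π = id. -/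
/-- Composing an integro-differential algebra of weight 0 with multiplication by an
invertible element produces a weighted Reynolds operator with weight `D(1)`. -/
theorem stmt7 {k R : Type*} [Field k] [CharZero k] [CommRing R] [Algebra k R]
    (d : R →ₗ[k] R) (hd : ∀ x y, d (x * y) = d x * y + x * d y)
    (P : R →ₗ[k] R) (hdP : ∀ x, d (P x) = x)
    (hintdiff : ∀ x y, P (d x) * P (d y) = P (d x) * y + x * P (d y) - P (d (x * y)))
    (lam : Rˣ) (he : IsUnit ((lam⁻¹ : Rˣ) - P (d (lam⁻¹ : Rˣ))))
    (D : R → R) (hD : ∀ x, D x = d ((lam⁻¹ : Rˣ) * x))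
    (Pi : R → R) (hPi : ∀ x, Pi x = (lam : R) * P x) :
    (∀ x y, Pi x * Pi y =
        Pi (Pi x * y) + Pi (x * Pi y) - Pi (Pi x * D 1 * Pi y)) ∧
      ∀ x, D (Pi x) = x := by
  set μ : R := ((lam⁻¹ : Rˣ) : R) with hμ
  have hlμ : (lam : R) * μ = 1 := lam.mul_inv
  have hμl : μ * (lam : R) = 1 := lam.inv_mul
  have hd1 : d 1 = 0 := by
    have h := hd 1 1
    simp only [one_mul, mul_one] at h
    linear_combination -h
  have hprod : d (lam : R) * μ + (lam : R) * d μ = 0 := by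
    have h := hd (lam : R) μ
    rw [hlμ, hd1] at h
    linear_combination -h
  have hdlam2 : d (lam : R) = -((lam : R) * (lam : R) * d μ) := by
    linear_combination (lam : R) * hprod - d (lam : R) * hμl
  have key : ∀ a b : R, P (d (P a * P b)) = P a * P b := by
    intro a b
    have h := hintdiff (P a) (P b)
    rw [hdP, hdP] at h
    linear_combination h
  have keyL : ∀ a b : R, P (d ((lam : R) * (P a * P b))) = (lam : R) * (P a * P b) := by
    intro a b
    have h := hintdiff (lam : R) (P a * P b)
    rw [key a b] at h
    linear_combination h
  have main : ∀ a b : R, (lam : R) * (P a * P b) =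
      P (d (lam : R) * (P a * P b)) + (P ((lam : R) * (a * P b)) + P ((lam : R) * (P a * b))) := by
    intro a b
    have h1 := keyL a b
    have h2 : d ((lam : R) * (P a * P b)) =
        d (lam : R) * (P a * P b) + ((lam : R) * (a * P b) + (lam : R) * (P a * b)) := by
      rw [hd, hd, hdP, hdP]; ring
    rw [h2, map_add, map_add] at h1
    linear_combination -h1
  constructor
  · intro x y
    rw [hPi, hPi, hPi, hPi, hPi, hD, mul_one]
    have e1 : (lam : R) * P x * y = (lam : R) * (P x * y) := by ring
    have e2 : x * ((lam : R) * P y) = (lam : R) * (x * P y) := by ring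
    have e3 : (lam : R) * P x * d μ * ((lam : R) * P y) = -(d (lam : R) * (P x * P y)) := by
      rw [hdlam2]; ring
    rw [e1, e2, e3, map_neg]
    linear_combination (lam : R) * main x y
  · intro x
    rw [hD, hPi, ← mul_assoc, hμl, one_mul, hdP]
end

section
/- Let (R, d, P) be a commutative unital integro-differential algebra of weight 0. Then the evaluation map e := id_R - P∘d is an algebra homomorphism: e(xy) = e(x)e(y) for all x,y ∈ R and e(1) = 1. -/
/-- In a commutative unital integro-differential algebra of weight 0, the evaluation
`e := id - P∘d` is an algebra homomorphism. -/
theorem stmt8 {k R : Type*} [Field k] [CharZero k] [CommRing R] [Algebra k R]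
    (d : R →ₗ[k] R) (hd : ∀ x y, d (x * y) = d x * y + x * d y)
    (P : R →ₗ[k] R) (hdP : ∀ x, d (P x) = x)
    (hintdiff : ∀ x y, P (d x) * P (d y) = P (d x) * y + x * P (d y) - P (d (x * y)))
    (e : R → R) (he : ∀ x, e x = x - P (d x)) :
    (∀ x y, e (x * y) = e x * e y) ∧ e 1 = 1 := by
  have hd1 : d 1 = 0 := by
    simpa using hd 1 1
  constructor
  · intro x y
    rw [he, he, he]
    linear_combination -hintdiff x y
  · rw [he, hd1, map_zero]; ring
end

section
/- Let K(x,t) = k(x)h(t) with k ∈ C¹(I) and h ∈ C(I) both nowhere zero on an open interval I, fix a ∈ I, and define P_K(f)(x) := k(x)∫_a^x h(t)f(t)dt and D_K(f)(x) := (1/h(x))(f(x)/k(x))'. Then P_K satisfies the weighted Reynolds identity P_K(f)P_K(g) = P_K(fP_K(g)) + P_K(P_K(f)g) - P_K(D_K(1)·P_K(f)P_K(g)) for all f,g ∈ C(I). -/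
/-- The Volterra operator `P_K(f)(x) = ∫_a^x k(x)h(t)f(t) dt`. -/
noncomputable def PK (k h : ℝ → ℝ) (a : ℝ) (f : ℝ → ℝ) (x : ℝ) : ℝ :=
  k x * ∫ t in a..x, h t * f t

/-- Auxiliary: the bare integral `∫_a^y h(t) f(t) dt`. -/
noncomputable def Fa (h f : ℝ → ℝ) (a y : ℝ) : ℝ := ∫ t in a..y, h t * f t

/-- `P_K` satisfies the weighted Reynolds identity of weight
`D_K(1)(x) = -k'(x)/(h(x)k(x)²)`. -/
theorem stmt11 (I : Set ℝ) (hI : IsOpen I) (hI' : I.OrdConnected)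
    (a : ℝ) (ha : a ∈ I) (k h : ℝ → ℝ)
    (hk : ∀ x ∈ I, DifferentiableAt ℝ k x) (hk' : ContinuousOn (deriv k) I)
    (hk0 : ∀ x ∈ I, k x ≠ 0)
    (hh : ContinuousOn h I) (hh0 : ∀ x ∈ I, h x ≠ 0)
    (f g : ℝ → ℝ) (hf : ContinuousOn f I) (hg : ContinuousOn g I) :
    ∀ x ∈ I, PK k h a f x * PK k h a g x =
      PK k h a (fun t => f t * PK k h a g t) x
        + PK k h a (fun t => PK k h a f t * g t) x
        - PK k h a
            (fun t => (-deriv k t / (h t * (k t) ^ 2)) * (PK k h a f t * PK k h a g t))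
            x := by
  intro x hx
  have PKe : ∀ (f : ℝ → ℝ) (y : ℝ), PK k h a f y = k y * Fa h f a y := fun _ _ => rfl
  have huIcc : Set.uIcc a x ⊆ I := hI'.uIcc_subset ha hx
  have hkc : ContinuousOn k I := fun t ht => ((hk t ht).continuousAt).continuousWithinAt
  have hFd : ∀ (f : ℝ → ℝ), ContinuousOn f I → ∀ t ∈ I,
      HasDerivAt (Fa h f a) (h t * f t) t := by
    intro f hf t ht
    exact intervalIntegral.integral_hasDerivAt_right
      (((hh.mul hf).mono (hI'.uIcc_subset ha ht)).intervalIntegrable)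
      ((hh.mul hf).stronglyMeasurableAtFilter hI t ht)
      ((hh.mul hf).continuousAt (hI.mem_nhds ht))
  have hFc : ∀ (f : ℝ → ℝ), ContinuousOn f I → ContinuousOn (Fa h f a) I :=
    fun f hf t ht => (hFd f hf t ht).continuousAt.continuousWithinAt
  -- FTC key identity
  have key : (∫ t in a..x, (deriv k t * (Fa h f a t * Fa h g a t)
        + k t * (h t * f t * Fa h g a t + Fa h f a t * (h t * g t))))
      = k x * (Fa h f a x * Fa h g a x) := by
    have hderiv : ∀ t ∈ Set.uIcc a x,
        HasDerivAt (fun y => k y * (Fa h f a y * Fa h g a y))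
          (deriv k t * (Fa h f a t * Fa h g a t)
            + k t * (h t * f t * Fa h g a t + Fa h f a t * (h t * g t))) t := by
      intro t ht
      exact ((hk t (huIcc ht)).hasDerivAt.mul
        ((hFd f hf t (huIcc ht)).mul (hFd g hg t (huIcc ht))))
    have hcont : ContinuousOn (fun t => deriv k t * (Fa h f a t * Fa h g a t)
        + k t * (h t * f t * Fa h g a t + Fa h f a t * (h t * g t))) (Set.uIcc a x) := by
      apply ContinuousOn.add
      · exact (hk'.mono huIcc).mul (((hFc f hf).mono huIcc).mul ((hFc g hg).mono huIcc))
      · exact (hkc.mono huIcc).mul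
          ((((hh.mono huIcc).mul (hf.mono huIcc)).mul ((hFc g hg).mono huIcc)).add
            (((hFc f hf).mono huIcc).mul ((hh.mono huIcc).mul (hg.mono huIcc))))
    have := intervalIntegral.integral_eq_sub_of_hasDerivAt hderiv hcont.intervalIntegrable
    simpa [Fa, intervalIntegral.integral_same] using this
  -- integrability of the three pieces
  have hA : IntervalIntegrable (fun t => h t * (f t * (k t * Fa h g a t))) MeasureTheory.volume a x :=
    (((hh.mono huIcc).mul ((hf.mono huIcc).mul
      ((hkc.mono huIcc).mul ((hFc g hg).mono huIcc))))).intervalIntegrable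
  have hB : IntervalIntegrable (fun t => h t * ((k t * Fa h f a t) * g t)) MeasureTheory.volume a x :=
    (((hh.mono huIcc).mul (((hkc.mono huIcc).mul ((hFc f hf).mono huIcc)).mul
      (hg.mono huIcc)))).intervalIntegrable
  have hC : IntervalIntegrable (fun t => deriv k t * (Fa h f a t * Fa h g a t)) MeasureTheory.volume a x :=
    ((hk'.mono huIcc).mul (((hFc f hf).mono huIcc).mul ((hFc g hg).mono huIcc))).intervalIntegrable
  have hsplit : (∫ t in a..x, h t * (f t * (k t * Fa h g a t)))
      + (∫ t in a..x, h t * ((k t * Fa h f a t) * g t))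
      + (∫ t in a..x, deriv k t * (Fa h f a t * Fa h g a t))
      = k x * (Fa h f a x * Fa h g a x) := by
    rw [← key, ← intervalIntegral.integral_add hA hB,
      ← intervalIntegral.integral_add (hA.add hB) hC]
    apply intervalIntegral.integral_congr
    intro t ht
    ring
  have hthird : (∫ t in a..x, h t * ((-deriv k t / (h t * k t ^ 2)) *
        ((k t * Fa h f a t) * (k t * Fa h g a t))))
      = ∫ t in a..x, -(deriv k t * (Fa h f a t * Fa h g a t)) := by
    apply intervalIntegral.integral_congr
    intro t ht
    have h1 := hh0 t (huIcc ht)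
    have h2 := hk0 t (huIcc ht)
    field_simp
  simp only [PKe]
  show (k x * Fa h f a x) * (k x * Fa h g a x)
      = k x * (∫ t in a..x, h t * (f t * (k t * Fa h g a t)))
        + k x * (∫ t in a..x, h t * ((k t * Fa h f a t) * g t))
        - k x * (∫ t in a..x, h t * ((-deriv k t / (h t * k t ^ 2)) *
            ((k t * Fa h f a t) * (k t * Fa h g a t))))
  rw [hthird, intervalIntegral.integral_neg]
  linear_combination (-(k x)) * hsplit
end

section
/- In the complete tensor module over a commutative pointed algebra (A, λ), the complete shuffle product satisfies the recursion: for pure tensors 𝔞 = a₁⊗𝔞' ∈ A^⊗m and 𝔟 = b₁⊗𝔟' ∈ A^⊗n with m,n ≥ 1, one has 𝔞 ⍁ 𝔟 = a₁⊗(𝔞' ⍁ 𝔟) + b₁⊗(𝔞 ⍁ 𝔟') - λ⊗(𝔞 ⍁ 𝔟), where ⍁ denotes the complete shuffle product defined as the sum over all shuffles of 𝔞 and 𝔟 together with all insertions of tensor powers (-λ)^⊗i in front of each factor occurring before the final factor of either 𝔞 or 𝔟. -/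
open scoped TensorProduct

noncomputable section

variable (𝕜 : Type*) [Field 𝕜] [CharZero 𝕜] (A : Type*) [CommRing A] [Algebra 𝕜 A]

/-- The pure tensor `a₁ ⊗ ⋯ ⊗ aₘ ∈ A^⊗m` associated to a list `[a₁,…,aₘ]`. -/
def tprodList (l : List A) : TensorPower 𝕜 l.length A :=
  PiTensorProduct.tprod 𝕜 fun i => l.get i

/-- The pure tensor of a list, viewed in the degree-`r` component (and `0` if the
length of the list is not `r`). -/
def tprodIn (r : ℕ) (l : List A) : TensorPower 𝕜 r A :=
  if h : l.length = r then
    cast (congrArg (fun m => TensorPower 𝕜 m A) h) (tprodList 𝕜 A l) else 0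

/-- All shuffles of two lists (each summand of the shuffle product, as a word). -/
def shuffles {α : Type*} : List α → List α → List (List α)
  | [], l => [l]
  | l, [] => [l]
  | x :: xs, y :: ys =>
      ((shuffles xs (y :: ys)).map (x :: ·)) ++ ((shuffles (x :: xs) ys).map (y :: ·))
  termination_by l₁ l₂ => l₁.length + l₂.length

/-- The (1-based) position of the last element of a tagged shuffle word carrying
tag `b`. -/
def lastPos (b : Bool) (t : List (A × Bool)) : ℕ :=
  t.length - List.findIdx (fun x => x.2 == b) t.reverse

/-- The number of initial positions of a tagged shuffle word at which insertions of
`-λ` are allowed: up to and including the earlier of the two final factors. -/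
def allowedLen (t : List (A × Bool)) : ℕ := min (lastPos A true t) (lastPos A false t)

/-- Insert `iⱼ` copies of `-λ` in front of the `j`-th entry of a word, for `j`
ranging over the insertion positions. -/
def insertLam (lam : A) : List ℕ → List A → List A
  | [], l => l
  | _ :: _, [] => []
  | n :: ns, x :: xs => List.replicate n (-lam) ++ x :: insertLam lam ns xs

/-- The degree-`r` component of the complete shuffle product of two nonempty pure
tensors: the sum over all shuffles `σ` and all insertion tuples `𝔦 ∈ I_σ` of the
extended words `(-λ)^⊗i₁ ⊗ c_{σ(1)} ⊗ ⋯ ⊗ (-λ)^⊗i_{m+n} ⊗ c_{σ(m+n)}`. -/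
def cshufComp (lam : A) (a b : List A) (r : ℕ) : TensorPower 𝕜 r A :=
  ((shuffles (a.map (·, true)) (b.map (·, false))).map fun t =>
    ∑ i ∈ Finset.Nat.antidiagonalTuple (allowedLen A t) (r - t.length),
      tprodIn 𝕜 A r (insertLam A lam (List.ofFn i) (t.map Prod.fst))).sum

/-- The complete shuffle product `𝔞 ⍁ 𝔟` of two pure tensors (given as lists), as an
element of the completed tensor module `∏_{k≥0} A^⊗k`; empty lists represent `1`. -/
def cSh (lam : A) : List A → List A → ∀ r : ℕ, TensorPower 𝕜 r A
  | [], b => fun r => tprodIn 𝕜 A r b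
  | a, [] => fun r => tprodIn 𝕜 A r a
  | a, b => fun r => cshufComp 𝕜 A lam a b r

/-- Prepending a fixed tensor factor `x ⊗ -` as a linear map `A^⊗r → A^⊗(r+1)`. -/
def prependMap (x : A) (r : ℕ) : TensorPower 𝕜 r A →ₗ[𝕜] TensorPower 𝕜 (r + 1) A :=
  PiTensorProduct.lift
    { toFun := fun v => PiTensorProduct.tprod 𝕜 (Fin.cons x v)
      map_update_add' := by
        intro inst v i y z
        convert MultilinearMap.map_update_add
          (PiTensorProduct.tprod 𝕜 (s := fun _ : Fin (r + 1) => A))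
          (Fin.cons x v) i.succ y z using 3 <;>
          (try simp [← Fin.cons_update]) <;> congr!
      map_update_smul' := by
        intro inst v i c y
        convert MultilinearMap.map_update_smul
          (PiTensorProduct.tprod 𝕜 (s := fun _ : Fin (r + 1) => A))
          (Fin.cons x v) i.succ c y using 3 <;>
          (try simp [← Fin.cons_update]) <;> congr! }

/-- Prepending a fixed tensor factor to a series in `∏_{k≥0} A^⊗k`. -/
def prepSeries (x : A) (m : ∀ r : ℕ, TensorPower 𝕜 r A) : ∀ r : ℕ, TensorPower 𝕜 r A
  | 0 => 0
  | r + 1 => prependMap 𝕜 A x r (m r)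


-- ===================== auxiliary lemmas =====================

theorem tprodIn_ne (r : ℕ) (w : List A) (h : w.length ≠ r) : tprodIn 𝕜 A r w = 0 :=
  dif_neg h

theorem tprodIn_cons (x : A) (l : List A) (r : ℕ) :
    tprodIn 𝕜 A (r + 1) (x :: l) = prependMap 𝕜 A x r (tprodIn 𝕜 A r l) := by
  rcases eq_or_ne l.length r with h | h
  · subst h
    have h1 : tprodIn 𝕜 A l.length l = tprodList 𝕜 A l := dif_pos rfl
    have h2 : tprodIn 𝕜 A (l.length + 1) (x :: l) = tprodList 𝕜 A (x :: l) := dif_pos rfl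
    rw [h1, h2]
    show _ = PiTensorProduct.lift _ (PiTensorProduct.tprod 𝕜 fun i => l.get i)
    rw [PiTensorProduct.lift.tprod]
    show PiTensorProduct.tprod 𝕜 (fun i => (x :: l).get i)
      = PiTensorProduct.tprod 𝕜 (Fin.cons x fun i => l.get i)
    congr 1
    funext i
    induction i using Fin.cases with
    | zero => simp
    | succ i => simp [Fin.cons_succ]
  · have h1 : tprodIn 𝕜 A r l = 0 := dif_neg h
    have h2 : tprodIn 𝕜 A (r + 1) (x :: l) = 0 := dif_neg (by simpa using h)
    rw [h1, h2, map_zero]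

theorem prependMap_neg (x : A) (r : ℕ) (v : TensorPower 𝕜 r A) :
    prependMap 𝕜 A (-x) r v = - prependMap 𝕜 A x r v := by
  induction v using PiTensorProduct.induction_on with
  | smul_tprod c f =>
      have hx : ∀ y : A, prependMap 𝕜 A y r (PiTensorProduct.tprod 𝕜 f)
          = PiTensorProduct.tprod 𝕜 (Fin.cons y f) := fun y => PiTensorProduct.lift.tprod f
      rw [map_smul, map_smul, hx, hx]
      have h := MultilinearMap.map_update_neg
        (PiTensorProduct.tprod 𝕜 (s := fun _ : Fin (r + 1) => A)) (Fin.cons x f) 0 x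
      rw [Fin.update_cons_zero, Fin.update_cons_zero] at h
      rw [h, smul_neg]
  | add y z hy hz => rw [map_add, hy, hz, map_add, neg_add]

theorem sum_AT_succ {M : Type*} [AddCommMonoid M] (k n : ℕ) (f : (Fin (k + 1) → ℕ) → M) :
    ∑ i ∈ Finset.Nat.antidiagonalTuple (k + 1) n, f i
      = ∑ p ∈ Finset.HasAntidiagonal.antidiagonal n, ∑ j ∈ Finset.Nat.antidiagonalTuple k p.2,
          f (Fin.cons p.1 j) := by
  rw [← Finset.sum_sigma (Finset.HasAntidiagonal.antidiagonal n) (fun p => Finset.Nat.antidiagonalTuple k p.2)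
      (fun x => f (Fin.cons x.1.1 x.2))]
  symm
  refine Finset.sum_nbij' (fun x => Fin.cons x.1.1 x.2)
    (fun i => ⟨(i 0, ∑ j : Fin k, i j.succ), Fin.tail i⟩) ?_ ?_ ?_ ?_ ?_
  · intro x hx
    simp only [Finset.mem_sigma, Finset.HasAntidiagonal.mem_antidiagonal,
      Finset.Nat.mem_antidiagonalTuple] at hx ⊢
    rw [Fin.sum_cons, hx.2]
    exact hx.1
  · intro i hi
    simp only [Finset.mem_sigma, Finset.HasAntidiagonal.mem_antidiagonal,
      Finset.Nat.mem_antidiagonalTuple] at hi ⊢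
    exact ⟨by rw [← hi, Fin.sum_univ_succ], rfl⟩
  · intro x hx
    simp only [Finset.mem_sigma, Finset.HasAntidiagonal.mem_antidiagonal,
      Finset.Nat.mem_antidiagonalTuple] at hx
    refine Sigma.ext ?_ ?_
    · simp [hx.2]
    · simp
  · intro i hi
    exact Fin.cons_self_tail i
  · intro x hx
    rfl

theorem ofFn_cons {α : Type*} {k : ℕ} (n : α) (j : Fin k → α) :
    List.ofFn (Fin.cons n j) = n :: List.ofFn j := by
  rw [List.ofFn_succ]
  simp

theorem insertLam_zero_cons (lam : A) (ns : List ℕ) (x : A) (xs : List A) :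
    insertLam A lam (0 :: ns) (x :: xs) = x :: insertLam A lam ns xs := by
  simp [insertLam]

theorem insertLam_succ_cons (lam : A) (m : ℕ) (ns : List ℕ) (x : A) (xs : List A) :
    insertLam A lam ((m + 1) :: ns) (x :: xs) = -lam :: insertLam A lam (m :: ns) (x :: xs) := by
  simp [insertLam, List.replicate_succ]

theorem insertLam_replicate_zero (lam : A) :
    ∀ (L : ℕ) (w : List A), insertLam A lam (List.replicate L 0) w = w
  | 0, _ => rfl
  | _ + 1, [] => rfl
  | L + 1, x :: xs => by
      rw [List.replicate_succ, insertLam_zero_cons, insertLam_replicate_zero lam L xs]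

/-- The inner sum over insertion tuples. -/
def insSum (lam : A) (L d r : ℕ) (w : List A) : TensorPower 𝕜 r A :=
  ∑ i ∈ Finset.Nat.antidiagonalTuple L d, tprodIn 𝕜 A r (insertLam A lam (List.ofFn i) w)

theorem insSum_d_zero (lam : A) (L r : ℕ) (w : List A) :
    insSum 𝕜 A lam L 0 r w = tprodIn 𝕜 A r w := by
  unfold insSum
  rw [Finset.Nat.antidiagonalTuple_zero_right, Finset.sum_singleton]
  have h : List.ofFn (0 : Fin L → ℕ) = List.replicate L 0 := List.ofFn_const L 0
  rw [h, insertLam_replicate_zero]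

theorem insSum_L_zero (lam : A) (d r : ℕ) (w : List A) (hd : d = r - w.length) :
    insSum 𝕜 A lam 0 d r w = tprodIn 𝕜 A r w := by
  cases d with
  | zero => exact insSum_d_zero 𝕜 A lam 0 r w
  | succ d =>
      unfold insSum
      rw [Finset.Nat.antidiagonalTuple_zero_succ, Finset.sum_empty,
        tprodIn_ne 𝕜 A r w (by omega)]

theorem insSum_cons (lam : A) (L d r : ℕ) (c : A) (w : List A) (hd : d = 0 → r ≤ w.length) :
    insSum 𝕜 A lam (L + 1) d (r + 1) (c :: w)
      = prependMap 𝕜 A c r (insSum 𝕜 A lam L d r w)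
        + prependMap 𝕜 A (-lam) r (insSum 𝕜 A lam (L + 1) (d - 1) r (c :: w)) := by
  cases d with
  | zero =>
      have h0 := hd rfl
      rw [Nat.zero_sub, insSum_d_zero, insSum_d_zero, insSum_d_zero, tprodIn_cons,
        tprodIn_ne 𝕜 A r (c :: w) (by simp only [List.length_cons]; omega), map_zero, add_zero]
  | succ d =>
      rw [Nat.add_sub_cancel]
      unfold insSum
      rw [sum_AT_succ, Finset.Nat.sum_antidiagonal_succ]
      congr 1
      · show (∑ j ∈ Finset.Nat.antidiagonalTuple L (d + 1),
            tprodIn 𝕜 A (r + 1) (insertLam A lam (List.ofFn (Fin.cons 0 j)) (c :: w))) = _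
        rw [map_sum]
        refine Finset.sum_congr rfl fun j _ => ?_
        rw [ofFn_cons, insertLam_zero_cons, tprodIn_cons]
      · show (∑ p ∈ Finset.HasAntidiagonal.antidiagonal d, ∑ j ∈ Finset.Nat.antidiagonalTuple L p.2,
            tprodIn 𝕜 A (r + 1) (insertLam A lam (List.ofFn (Fin.cons (p.1 + 1) j)) (c :: w))) = _
        rw [sum_AT_succ L d
          (fun i => tprodIn 𝕜 A r (insertLam A lam (List.ofFn i) (c :: w))), map_sum]
        refine Finset.sum_congr rfl fun p _ => ?_
        rw [map_sum]
        refine Finset.sum_congr rfl fun j _ => ?_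
        rw [ofFn_cons, ofFn_cons, insertLam_succ_cons, tprodIn_cons]

theorem lastPos_cons (b : Bool) (c : A × Bool) (t : List (A × Bool))
    (h : c.2 = b ∨ ∃ x ∈ t, x.2 = b) :
    lastPos A b (c :: t) = lastPos A b t + 1 := by
  unfold lastPos
  rw [List.reverse_cons, List.findIdx_append]
  by_cases hex : ∃ x ∈ t.reverse, (fun x : A × Bool => x.2 == b) x = true
  · have hlt := List.findIdx_lt_length_of_exists hex
    rw [if_pos hlt]
    rw [List.length_reverse] at hlt
    simp only [List.length_cons]
    omega
  · have hall : List.findIdx (fun x : A × Bool => x.2 == b) t.reverse = t.reverse.length := by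
      rw [List.findIdx_eq_length]
      intro x hx
      by_contra hc
      exact hex ⟨x, hx, by simpa using hc⟩
    have hc2 : c.2 = b := by
      rcases h with h | ⟨x, hx, hxb⟩
      · exact h
      · exact absurd ⟨x, List.mem_reverse.mpr hx, by simp [hxb]⟩ hex
    rw [if_neg (by rw [hall]; exact lt_irrefl _)]
    simp only [List.findIdx_cons, hc2, beq_self_eq_true, cond_true, List.length_reverse] at hall ⊢
    rw [hall]
    simp only [List.length_cons]
    omega

theorem lastPos_eq_zero (b : Bool) (t : List (A × Bool)) (h : ∀ x ∈ t, x.2 ≠ b) :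
    lastPos A b t = 0 := by
  unfold lastPos
  have hall : List.findIdx (fun x : A × Bool => x.2 == b) t.reverse = t.reverse.length := by
    rw [List.findIdx_eq_length]
    intro x hx
    simpa using h x (List.mem_reverse.mp hx)
  rw [hall, List.length_reverse, Nat.sub_self]

theorem allowedLen_cons (c : A × Bool) (t : List (A × Bool))
    (h : ∃ x ∈ t, x.2 = !c.2) :
    allowedLen A (c :: t) = allowedLen A t + 1 := by
  have htrue : c.2 = true ∨ ∃ x ∈ t, x.2 = true := by
    cases hc : c.2 with
    | true => exact Or.inl rfl
    | false => exact Or.inr (by simpa [hc] using h)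
  have hfalse : c.2 = false ∨ ∃ x ∈ t, x.2 = false := by
    cases hc : c.2 with
    | false => exact Or.inl rfl
    | true => exact Or.inr (by simpa [hc] using h)
  unfold allowedLen
  rw [lastPos_cons A true c t htrue, lastPos_cons A false c t hfalse, Nat.succ_min_succ]

theorem shuffles_nil_left {α : Type*} (l : List α) : shuffles ([] : List α) l = [l] := by
  rw [shuffles]

theorem shuffles_cons_nil {α : Type*} (x : α) (xs : List α) :
    shuffles (x :: xs) ([] : List α) = [x :: xs] := by
  rw [shuffles]
  simp

theorem shuffles_cons_cons {α : Type*} (x y : α) (xs ys : List α) :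
    shuffles (x :: xs) (y :: ys)
      = ((shuffles xs (y :: ys)).map (x :: ·)) ++ ((shuffles (x :: xs) ys).map (y :: ·)) := by
  rw [shuffles]

theorem shuffles_perm {α : Type*} : ∀ l₁ l₂ : List α, ∀ t ∈ shuffles l₁ l₂, t.Perm (l₁ ++ l₂) := by
  intro l₁ l₂
  induction l₁, l₂ using shuffles.induct with
  | case1 l =>
      intro t ht
      rw [shuffles_nil_left] at ht
      simp only [List.mem_singleton] at ht
      subst ht
      simp
  | case2 l h =>
      cases l with
      | nil => exact absurd rfl h
      | cons x xs =>
          intro t ht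
          rw [shuffles_cons_nil] at ht
          simp only [List.mem_singleton] at ht
          subst ht
          simp
  | case3 x xs y ys ih1 ih2 =>
      intro t ht
      rw [shuffles_cons_cons] at ht
      rw [List.mem_append] at ht
      rcases ht with ht | ht <;> rw [List.mem_map] at ht <;> obtain ⟨t', ht', rfl⟩ := ht
      · exact (ih1 t' ht').cons x
      · exact ((ih2 t' ht').cons y).trans List.perm_middle.symm

theorem list_sum_map_prepend (x : A) (r : ℕ) {β : Type*} (l : List β)
    (g : β → TensorPower 𝕜 r A) :
    (l.map fun t => prependMap 𝕜 A x r (g t)).sum = prependMap 𝕜 A x r (l.map g).sum := by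
  induction l with
  | nil => simp
  | cons h tl ih => simp [ih]

theorem list_sum_map_add {β M : Type*} [AddCommMonoid M] (l : List β) (f g : β → M) :
    (l.map fun t => f t + g t).sum = (l.map f).sum + (l.map g).sum := by
  induction l with
  | nil => simp
  | cons h tl ih =>
      simp only [List.map_cons, List.sum_cons, ih]
      abel

theorem map_fst_tag (bo : Bool) (l : List A) : (l.map (·, bo)).map Prod.fst = l := by
  induction l with
  | nil => rfl
  | cons x xs ih => simp only [List.map_cons, ih]

theorem cSh_eq_sum (lam : A) (a b : List A) (r : ℕ) :
    cSh 𝕜 A lam a b r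
      = ((shuffles (a.map (·, true)) (b.map (·, false))).map fun t =>
          insSum 𝕜 A lam (allowedLen A t) (r - t.length) r (t.map Prod.fst)).sum := by
  match a, b with
  | [], [] =>
      show tprodIn 𝕜 A r [] = _
      rw [show (List.map (·, true) ([] : List A)) = [] from rfl,
        show (List.map (·, false) ([] : List A)) = [] from rfl, shuffles_nil_left,
        List.map_singleton, List.sum_singleton]
      simp only [List.map_nil, List.length_nil]
      rw [show allowedLen A ([] : List (A × Bool)) = 0 from rfl]
      rw [insSum_L_zero 𝕜 A lam _ r [] (by simp)]
  | [], b₀ :: bs =>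
      show tprodIn 𝕜 A r (b₀ :: bs) = _
      rw [show (List.map (·, true) ([] : List A)) = [] from rfl, shuffles_nil_left,
        List.map_singleton, List.sum_singleton]
      have h0 : allowedLen A ((b₀ :: bs).map (·, false)) = 0 := by
        unfold allowedLen
        rw [lastPos_eq_zero A true ((b₀ :: bs).map (·, false)) ?_, Nat.zero_min]
        intro x hx
        rw [List.mem_map] at hx
        obtain ⟨y, _, rfl⟩ := hx
        simp
      have h1 : ((b₀ :: bs).map (·, false)).map Prod.fst = b₀ :: bs :=
        map_fst_tag A false (b₀ :: bs)
      rw [h0, h1, insSum_L_zero 𝕜 A lam _ r (b₀ :: bs) (by rw [List.length_map])]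
  | a₀ :: as, [] =>
      show tprodIn 𝕜 A r (a₀ :: as) = _
      rw [show (List.map (·, false) ([] : List A)) = [] from rfl,
        show (List.map (·, true) (a₀ :: as)) = (a₀, true) :: as.map (·, true) from rfl,
        shuffles_cons_nil, List.map_singleton, List.sum_singleton]
      have h0 : allowedLen A ((a₀, true) :: as.map (·, true)) = 0 := by
        unfold allowedLen
        rw [lastPos_eq_zero A false ((a₀, true) :: as.map (·, true)) ?_, Nat.min_zero]
        intro x hx
        rcases List.mem_cons.mp hx with h | h
        · subst h; simp
        · rw [List.mem_map] at h
          obtain ⟨y, _, rfl⟩ := h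
          simp
      have h1 : ((a₀, true) :: as.map (·, true)).map Prod.fst = a₀ :: as := by
        have := map_fst_tag A true (a₀ :: as)
        simpa only [List.map_cons] using this
      rw [h0, h1,
        insSum_L_zero 𝕜 A lam _ r (a₀ :: as) (by simp only [List.length_cons, List.length_map])]
  | a₀ :: as, b₀ :: bs => rfl

theorem cSh_split (lam : A) (a₁ b₁ : A) (a' b' : List A) (r : ℕ) :
    cSh 𝕜 A lam (a₁ :: a') (b₁ :: b') r
      = ((shuffles (a'.map (·, true)) ((b₁ :: b').map (·, false))).map
          (fun t => insSum 𝕜 A lam (allowedLen A ((a₁, true) :: t)) (r - (t.length + 1)) r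
            (a₁ :: t.map Prod.fst))).sum
      + ((shuffles ((a₁ :: a').map (·, true)) (b'.map (·, false))).map
          (fun t => insSum 𝕜 A lam (allowedLen A ((b₁, false) :: t)) (r - (t.length + 1)) r
            (b₁ :: t.map Prod.fst))).sum := by
  rw [cSh_eq_sum]
  rw [show (List.map (·, true) (a₁ :: a')) = (a₁, true) :: a'.map (·, true) from rfl,
    show (List.map (·, false) (b₁ :: b')) = (b₁, false) :: b'.map (·, false) from rfl,
    shuffles_cons_cons, List.map_append, List.sum_append, List.map_map, List.map_map]
  rfl

/-- The recursion for the complete shuffle product: for pure tensors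
`𝔞 = a₁⊗𝔞'` and `𝔟 = b₁⊗𝔟'` (of lengths `m, n ≥ 1`),
`𝔞 ⍁ 𝔟 = a₁⊗(𝔞' ⍁ 𝔟) + b₁⊗(𝔞 ⍁ 𝔟') - λ⊗(𝔞 ⍁ 𝔟)`. -/
theorem stmt16 (lam : A) (a₁ b₁ : A) (a' b' : List A) :
    cSh 𝕜 A lam (a₁ :: a') (b₁ :: b') =
      prepSeries 𝕜 A a₁ (cSh 𝕜 A lam a' (b₁ :: b'))
        + prepSeries 𝕜 A b₁ (cSh 𝕜 A lam (a₁ :: a') b')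
        - prepSeries 𝕜 A lam (cSh 𝕜 A lam (a₁ :: a') (b₁ :: b')) := by
  funext r
  simp only [Pi.add_apply, Pi.sub_apply]
  cases r with
  | zero =>
      rw [show prepSeries 𝕜 A a₁ (cSh 𝕜 A lam a' (b₁ :: b')) 0 = 0 from rfl,
        show prepSeries 𝕜 A b₁ (cSh 𝕜 A lam (a₁ :: a') b') 0 = 0 from rfl,
        show prepSeries 𝕜 A lam (cSh 𝕜 A lam (a₁ :: a') (b₁ :: b')) 0 = 0 from rfl,
        add_zero, sub_zero, cSh_eq_sum]
      apply List.sum_eq_zero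
      intro x hx
      rw [List.mem_map] at hx
      obtain ⟨t, ht, rfl⟩ := hx
      have hp := shuffles_perm _ _ t ht
      have hlen := hp.length_eq
      simp only [List.length_append, List.length_map, List.length_cons] at hlen
      rw [Nat.zero_sub, insSum_d_zero]
      apply tprodIn_ne
      rw [List.length_map]
      omega
  | succ r =>
      rw [show prepSeries 𝕜 A a₁ (cSh 𝕜 A lam a' (b₁ :: b')) (r + 1)
            = prependMap 𝕜 A a₁ r (cSh 𝕜 A lam a' (b₁ :: b') r) from rfl,
        show prepSeries 𝕜 A b₁ (cSh 𝕜 A lam (a₁ :: a') b') (r + 1)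
            = prependMap 𝕜 A b₁ r (cSh 𝕜 A lam (a₁ :: a') b' r) from rfl,
        show prepSeries 𝕜 A lam (cSh 𝕜 A lam (a₁ :: a') (b₁ :: b')) (r + 1)
            = prependMap 𝕜 A lam r (cSh 𝕜 A lam (a₁ :: a') (b₁ :: b') r) from rfl]
      rw [cSh_split 𝕜 A lam a₁ b₁ a' b' (r + 1)]
      have hA : ∀ t ∈ shuffles (a'.map (·, true)) ((b₁ :: b').map (·, false)),
          insSum 𝕜 A lam (allowedLen A ((a₁, true) :: t)) ((r + 1) - (t.length + 1)) (r + 1)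
              (a₁ :: t.map Prod.fst)
            = prependMap 𝕜 A a₁ r
                (insSum 𝕜 A lam (allowedLen A t) (r - t.length) r (t.map Prod.fst))
              + prependMap 𝕜 A (-lam) r
                (insSum 𝕜 A lam (allowedLen A ((a₁, true) :: t)) (r - (t.length + 1))
                  r (a₁ :: t.map Prod.fst)) := by
        intro t ht
        have hmem : ∃ x ∈ t, x.2 = !(a₁, true).2 := by
          have hp := shuffles_perm _ _ t ht
          exact ⟨(b₁, false), hp.mem_iff.mpr (by simp), rfl⟩
        have hAL := allowedLen_cons A (a₁, true) t hmem
        rw [hAL, show (r + 1) - (t.length + 1) = r - t.length from by omega,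
          show r - (t.length + 1) = r - t.length - 1 from by omega]
        exact insSum_cons 𝕜 A lam (allowedLen A t) (r - t.length) r a₁ (t.map Prod.fst)
          (by simp only [List.length_map]; omega)
      have hB : ∀ t ∈ shuffles ((a₁ :: a').map (·, true)) (b'.map (·, false)),
          insSum 𝕜 A lam (allowedLen A ((b₁, false) :: t)) ((r + 1) - (t.length + 1)) (r + 1)
              (b₁ :: t.map Prod.fst)
            = prependMap 𝕜 A b₁ r
                (insSum 𝕜 A lam (allowedLen A t) (r - t.length) r (t.map Prod.fst))
              + prependMap 𝕜 A (-lam) r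
                (insSum 𝕜 A lam (allowedLen A ((b₁, false) :: t)) (r - (t.length + 1))
                  r (b₁ :: t.map Prod.fst)) := by
        intro t ht
        have hmem : ∃ x ∈ t, x.2 = !(b₁, false).2 := by
          have hp := shuffles_perm _ _ t ht
          exact ⟨(a₁, true), hp.mem_iff.mpr (by simp), rfl⟩
        have hAL := allowedLen_cons A (b₁, false) t hmem
        rw [hAL, show (r + 1) - (t.length + 1) = r - t.length from by omega,
          show r - (t.length + 1) = r - t.length - 1 from by omega]
        exact insSum_cons 𝕜 A lam (allowedLen A t) (r - t.length) r b₁ (t.map Prod.fst)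
          (by simp only [List.length_map]; omega)
      rw [List.map_congr_left hA, List.map_congr_left hB,
        list_sum_map_add, list_sum_map_add,
        list_sum_map_prepend, list_sum_map_prepend, list_sum_map_prepend, list_sum_map_prepend,
        prependMap_neg, prependMap_neg,
        ← cSh_eq_sum 𝕜 A lam a' (b₁ :: b') r, ← cSh_eq_sum 𝕜 A lam (a₁ :: a') b' r,
        cSh_split 𝕜 A lam a₁ b₁ a' b' r, map_add]
      abel

end
end
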